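/- Let H₁, H₂ be real Hilbert spaces and (X, Y) a pair of random variables with values in H₁ × H₂, square Bochner-integrable. Define the cross-covariance κ = E[X ⊗ Y] − E[X] ⊗ E[Y] ∈ H₁ ⊗ H₂. Then ‖κ‖²_{H₁⊗H₂} = E[⟨X,X'⟩⟨Y,Y'⟩] + E[⟨X,X'⟩]·E[⟨Y,Y''⟩] − 2E[⟨X,X'⟩⟨Y,Y''⟩], where (X,Y), (X',Y'), (X'',Y'') are i.i.d. copies of (X,Y). -/

import Mathlib

/-! Expanding `‖E[X ⊗ Y] − E[X] ⊗ E[Y]‖²` bilinearly leaves three inner products of Bochner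
integrals. Since `⟪v, ·⟫` is a continuous linear functional, it commutes with the integral, so
each of them becomes an iterated integral over independent copies, and `⟪a⊗b, c⊗d⟫ = ⟪a,c⟫⟪b,d⟫`
turns the tensor inner products into the products of kernels. -/

open MeasureTheory ProbabilityTheory
open scoped RealInnerProductSpace

/-- An abstract model of the Hilbert-space tensor product `H₁ ⊗ H₂`: a Hilbert space `T`
together with a bilinear map `tmul` satisfying `⟪a⊗b, c⊗d⟫ = ⟪a,c⟫⟪b,d⟫`, whose simple
tensors span a dense subspace. -/
structure HilbertTensorProduct (H₁ H₂ T : Type*)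
    [NormedAddCommGroup H₁] [InnerProductSpace ℝ H₁]
    [NormedAddCommGroup H₂] [InnerProductSpace ℝ H₂]
    [NormedAddCommGroup T] [InnerProductSpace ℝ T] where
  tmul : H₁ → H₂ → T
  add_left : ∀ a a' b, tmul (a + a') b = tmul a b + tmul a' b
  add_right : ∀ a b b', tmul a (b + b') = tmul a b + tmul a b'
  smul_left : ∀ (c : ℝ) a b, tmul (c • a) b = c • tmul a b
  smul_right : ∀ (c : ℝ) a b, tmul a (c • b) = c • tmul a b
  inner_tmul : ∀ a b c d, ⟪tmul a b, tmul c d⟫ = ⟪a, c⟫ * ⟪b, d⟫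
  dense_span : Dense (↑(Submodule.span ℝ {x : T | ∃ a b, x = tmul a b}) : Set T)

section InnerIntegral

variable {α β E F : Type*} [MeasurableSpace α] [MeasurableSpace β]
  [NormedAddCommGroup E] [InnerProductSpace ℝ E] [CompleteSpace E]
  [NormedAddCommGroup F] [InnerProductSpace ℝ F] [CompleteSpace F]
  {μ : Measure α} {ν : Measure β}

theorem integral_inner_const {f : α → E} (hf : Integrable f μ) (c : E) :
    ∫ x, ⟪f x, c⟫ ∂μ = ⟪∫ x, f x ∂μ, c⟫ := by
  simp_rw [real_inner_comm c]
  exact integral_inner hf c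

theorem inner_integral_integral {f : α → E} {g : β → E} (hf : Integrable f μ)
    (hg : Integrable g ν) :
    ⟪∫ x, f x ∂μ, ∫ y, g y ∂ν⟫ = ∫ x, ∫ y, ⟪f x, g y⟫ ∂ν ∂μ := by
  simp_rw [integral_inner hg, integral_inner_const hf]

theorem inner_integral_mul_inner_integral (a : E) (b : F) {f : α → E} {g : β → F}
    (hf : Integrable f μ) (hg : Integrable g ν) :
    ⟪a, ∫ x, f x ∂μ⟫ * ⟪b, ∫ y, g y ∂ν⟫ = ∫ x, ∫ y, ⟪a, f x⟫ * ⟪b, g y⟫ ∂ν ∂μ := by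
  simp_rw [integral_const_mul, integral_mul_const, integral_inner hf, integral_inner hg]

end InnerIntegral

namespace HilbertTensorProduct

variable {H₁ H₂ T : Type*}
  [NormedAddCommGroup H₁] [InnerProductSpace ℝ H₁]
  [NormedAddCommGroup H₂] [InnerProductSpace ℝ H₂]
  [NormedAddCommGroup T] [InnerProductSpace ℝ T]

theorem norm_sub_tmul_sq (P : HilbertTensorProduct H₁ H₂ T) (u : T) (a : H₁) (b : H₂) :
    ‖u - P.tmul a b‖ ^ 2 = ⟪u, u⟫ + ⟪a, a⟫ * ⟪b, b⟫ - 2 * ⟪u, P.tmul a b⟫ := by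
  rw [norm_sub_sq_real, ← real_inner_self_eq_norm_sq, ← real_inner_self_eq_norm_sq, P.inner_tmul]
  ring

end HilbertTensorProduct

theorem norm_sq_cross_covariance_eq_expected_kernel_general
    {H₁ H₂ T : Type*}
    [NormedAddCommGroup H₁] [InnerProductSpace ℝ H₁] [CompleteSpace H₁]
    [NormedAddCommGroup H₂] [InnerProductSpace ℝ H₂] [CompleteSpace H₂]
    [NormedAddCommGroup T] [InnerProductSpace ℝ T] [CompleteSpace T]
    [MeasurableSpace H₁] [MeasurableSpace H₂]
    (P : HilbertTensorProduct H₁ H₂ T)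
    (γ : Measure (H₁ × H₂)) [IsProbabilityMeasure γ]
    (hi : Integrable (fun p : H₁ × H₂ => P.tmul p.1 p.2) γ)
    (h1 : MeasureTheory.MemLp (fun p : H₁ × H₂ => p.1) 2 γ)
    (h2 : MeasureTheory.MemLp (fun p : H₁ × H₂ => p.2) 2 γ) :
    ‖(∫ p, P.tmul p.1 p.2 ∂γ) - P.tmul (∫ p, p.1 ∂γ) (∫ p, p.2 ∂γ)‖ ^ 2
      = (∫ p, ∫ q, ⟪p.1, q.1⟫ * ⟪p.2, q.2⟫ ∂γ ∂γ)
        + (∫ p, ∫ q, ⟪p.1, q.1⟫ ∂γ ∂γ) * (∫ p, ∫ q, ⟪p.2, q.2⟫ ∂γ ∂γ)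
        - 2 * ∫ p, ∫ q, ∫ r, ⟪p.1, q.1⟫ * ⟪p.2, r.2⟫ ∂γ ∂γ ∂γ := by
  have hX := h1.integrable one_le_two
  have hY := h2.integrable one_le_two
  rw [P.norm_sub_tmul_sq, inner_integral_integral hi hi, inner_integral_integral hX hX,
    inner_integral_integral hY hY, ← integral_inner_const hi]
  simp_rw [P.inner_tmul, inner_integral_mul_inner_integral _ _ hX hY]

/-- HSIC as the squared Hilbert–Schmidt norm of the cross-covariance: for a
square-integrable law `γ` on `H₁ × H₂`, with `κ = E[X ⊗ Y] − E[X] ⊗ E[Y]`,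
`‖κ‖² = E⟪X,X'⟫⟪Y,Y'⟫ + E⟪X,X'⟫ · E⟪Y,Y''⟫ − 2 E⟪X,X'⟫⟪Y,Y''⟫`, with independent copies
expressed via iterated integrals against `γ`. -/
theorem norm_sq_cross_covariance_eq_expected_kernel
    {H₁ H₂ T : Type*}
    [NormedAddCommGroup H₁] [InnerProductSpace ℝ H₁] [CompleteSpace H₁]
    [NormedAddCommGroup H₂] [InnerProductSpace ℝ H₂] [CompleteSpace H₂]
    [NormedAddCommGroup T] [InnerProductSpace ℝ T] [CompleteSpace T]
    [MeasurableSpace H₁] [BorelSpace H₁] [MeasurableSpace H₂] [BorelSpace H₂]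
    (P : HilbertTensorProduct H₁ H₂ T)
    (γ : Measure (H₁ × H₂)) [IsProbabilityMeasure γ]
    (hi : Integrable (fun p : H₁ × H₂ => P.tmul p.1 p.2) γ)
    (h1 : MeasureTheory.MemLp (fun p : H₁ × H₂ => p.1) 2 γ)
    (h2 : MeasureTheory.MemLp (fun p : H₁ × H₂ => p.2) 2 γ) :
    ‖(∫ p, P.tmul p.1 p.2 ∂γ) - P.tmul (∫ p, p.1 ∂γ) (∫ p, p.2 ∂γ)‖ ^ 2
      = (∫ p, ∫ q, ⟪p.1, q.1⟫ * ⟪p.2, q.2⟫ ∂γ ∂γ)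
        + (∫ p, ∫ q, ⟪p.1, q.1⟫ ∂γ ∂γ) * (∫ p, ∫ q, ⟪p.2, q.2⟫ ∂γ ∂γ)
        - 2 * ∫ p, ∫ q, ∫ r, ⟪p.1, q.1⟫ * ⟪p.2, r.2⟫ ∂γ ∂γ ∂γ :=
  norm_sq_cross_covariance_eq_expected_kernel_general P γ hi h1 h2
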